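/- Let K be a compact Hausdorff topological space and let E be a complex linear subspace of C(K; ℂ). Then the following are equivalent: (1) E fails stable phase retrieval, i.e., for every C ≥ 1 there exist f, g ∈ E with inf{‖f − λg‖∞ : λ ∈ ℂ, |λ| = 1} > C·‖ |f| − |g| ‖∞; (2) for every m with 0 < m < 1/√2 − 1/2 and every ε > 0, there exist u, v ∈ E with ‖u‖∞ = ‖v‖∞ = 1, ‖u − λv‖∞ ≥ m for every λ ∈ ℂ with |λ| = 1, and ‖ t ↦ √(|Re(u(t)·conj(v(t)))|) ‖∞ < ε; (3) there exists m > 0 such that for every ε > 0 there exist u, v ∈ E with ‖u‖∞ = ‖v‖∞ = 1, ‖u − λv‖∞ ≥ m for every λ ∈ ℂ with |λ| = 1, and ‖ t ↦ √(|Re(u(t)·conj(v(t)))|) ‖∞ < ε. -/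

import Mathlib

/-- The continuous function `t ↦ |f t| - |g t|` for `f, g ∈ C(K; ℂ)`. -/
noncomputable def absDiffCM {K : Type*} [TopologicalSpace K] (f g : C(K, ℂ)) : C(K, ℝ) :=
  ⟨fun t => ‖f t‖ - ‖g t‖,
    (continuous_norm.comp f.continuous).sub (continuous_norm.comp g.continuous)⟩

/-- The continuous function `t ↦ √|Re (u t * conj (v t))|` for `u, v ∈ C(K; ℂ)`. -/
noncomputable def sqrtReMulConjCM {K : Type*} [TopologicalSpace K]
    (u v : C(K, ℂ)) : C(K, ℝ) :=
  ⟨fun t => Real.sqrt |(u t * (starRingEnd ℂ) (v t)).re|,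
    (Complex.continuous_re.comp
      (u.continuous.mul (Complex.continuous_conj.comp v.continuous))).abs.sqrt⟩

/-!
If `E` fails stable phase retrieval, pick `f, g ∈ E` for which `‖|f| - |g|‖` is tiny compared
with the phase distance `d = min_{|c| = 1} ‖f - c g‖` (a minimum, by compactness of the circle),
and rescale to `F = f / d`, `G = c₀ g / d` with `‖F - G‖ = 1 = min_{|c| = 1} ‖F - c G‖`.
Then `u = (F + G) / ‖F + G‖` and `v = F - G` are unit vectors with
`Re (u v̄) = (|F|² - |G|²) / ‖F + G‖` uniformly small. For a phase `c` with `|Re c| > ρ`,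
evaluating at a point where `|u| = 1` gives `‖u - c v‖² ≳ (Re c)²`. For `|Re c| ≤ ρ`,
`u - c v = (s - c) F + (s + c) G` with `s = 1 / ‖F + G‖` and `|s + c| ≈ |s - c|`, so the
separation of `F` from the phases of `G` transfers to `u - c v`; balancing the two cases is what
limits `m` to `1/√2 - 1/2`.

Conversely, `f = u + v` and `g = u - v` satisfy `||f| - |g|| ≤ 2 √|Re (u v̄)|` pointwise, while
`f - c g = (1 - c) u + (1 + c) v` with `max (|1 - c|, |1 + c|) ≥ 1` stays `m / 2` away from `0`.
-/

open Metric ComplexConjugate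

namespace Complex

lemma re_sq_add_im_sq_of_norm_eq_one {c : ℂ} (hc : ‖c‖ = 1) : c.re ^ 2 + c.im ^ 2 = 1 := by
  rw [← sq_norm_sub_sq_re c, hc]
  ring

lemma exists_norm_eq_one_norm_sub_eq (γ : ℂ) : ∃ c : ℂ, ‖c‖ = 1 ∧ ‖γ - c‖ = |‖γ‖ - 1| := by
  rcases eq_or_ne γ 0 with rfl | hγ
  · exact ⟨1, by simp, by simp⟩
  · have hγ' : ‖γ‖ ≠ 0 := norm_ne_zero_iff.mpr hγ
    have hγ'' : (‖γ‖ : ℂ) ≠ 0 := ofReal_ne_zero.mpr hγ'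
    refine ⟨γ / ‖γ‖, by simp [hγ'], ?_⟩
    have : γ - γ / ‖γ‖ = ((‖γ‖ - 1) / ‖γ‖ : ℝ) * γ := by push_cast; field_simp
    rw [this, norm_mul, norm_real, Real.norm_eq_abs, abs_div, abs_norm, div_mul_cancel₀ _ hγ']

lemma sq_norm_add_sub_sq_norm_sub (x y : ℂ) :
    ‖x + y‖ ^ 2 - ‖x - y‖ ^ 2 = 4 * (x * conj y).re := by
  rw [Complex.sq_norm, Complex.sq_norm, normSq_add, normSq_sub]
  ring

lemma re_add_mul_conj_sub (x y : ℂ) : ((x + y) * conj (x - y)).re = ‖x‖ ^ 2 - ‖y‖ ^ 2 := by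
  simp only [Complex.sq_norm, normSq_apply, mul_re, conj_re, conj_im, add_re, add_im, sub_re,
    sub_im]
  ring

lemma abs_norm_add_sub_norm_sub_le (x y : ℂ) :
    |‖x + y‖ - ‖x - y‖| ≤ 2 * √|(x * conj y).re| := by
  have hX := norm_nonneg (x + y)
  have hY := norm_nonneg (x - y)
  have h := sq_norm_add_sub_sq_norm_sub x y
  refine abs_le_of_sq_le_sq ?_ (by positivity)
  rw [mul_pow, Real.sq_sqrt (abs_nonneg _)]
  cases abs_cases (x * conj y).re <;> cases le_total ‖x + y‖ ‖x - y‖ <;> nlinarith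

/-- Expanding `‖x - c y‖²` leaves `‖x‖² (Re c)² + ‖y + i (Im c) x‖² - 2 Re c Re (x ȳ)`. -/
lemma sq_norm_mul_re_sq_sub_le (x y : ℂ) {c : ℂ} (hc : ‖c‖ = 1) :
    ‖x‖ ^ 2 * c.re ^ 2 - 2 * |(x * conj y).re| ≤ ‖x - c * y‖ ^ 2 := by
  have hc2 := re_sq_add_im_sq_of_norm_eq_one hc
  have hre : c.re * (x * conj y).re ≤ |(x * conj y).re| := by
    have := abs_re_le_norm c
    rw [hc] at this
    calc c.re * (x * conj y).re ≤ |c.re * (x * conj y).re| := le_abs_self _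
      _ ≤ |(x * conj y).re| := by
        rw [abs_mul]; exact mul_le_of_le_one_left (abs_nonneg _) this
  simp only [Complex.sq_norm, normSq_apply, mul_re, mul_im, conj_re, conj_im, sub_re,
    sub_im] at hre ⊢
  have key : (x.re - (c.re * y.re - c.im * y.im)) * (x.re - (c.re * y.re - c.im * y.im)) +
      (x.im - (c.re * y.im + c.im * y.re)) * (x.im - (c.re * y.im + c.im * y.re)) =
      (x.re * x.re + x.im * x.im) * c.re ^ 2 + (y.re - c.im * x.im) ^ 2 +
      (y.im + c.im * x.re) ^ 2 - 2 * (c.re * (x.re * y.re - x.im * -y.im)) := by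
    linear_combination (y.re ^ 2 + y.im ^ 2 - x.re ^ 2 - x.im ^ 2) * hc2
  linarith [sq_nonneg (y.re - c.im * x.im), sq_nonneg (y.im + c.im * x.re)]

/-- Here `m < 1/√2 - 1/2` enters: `‖s - c‖² - 4sρg ≥ (s - 2ρ)² + 1 - 2ρ - 4ρ²`, and
`1 - 2ρ - 4ρ² > 2ρ` exactly when `ρ < 1/√2 - 1/2`. -/
lemma le_norm_ofReal_sub_sub_mul {s ρ m g : ℝ} {c : ℂ} (hc : ‖c‖ = 1) (hs₀ : 0 < s)
    (hs₁ : s ≤ 1) (hcρ : |c.re| ≤ ρ) (hm : 0 ≤ m) (hg : 0 ≤ g) (hsg : 2 * s * g ≤ 1 + s)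
    (hbudget : 2 * m + 2 * ρ + 4 * ρ ^ 2 ≤ 1) :
    m ≤ ‖(s : ℂ) - c‖ - |‖(s : ℂ) - c‖ - ‖(s : ℂ) + c‖| * g := by
  set A := ‖(s : ℂ) - c‖
  set A' := ‖(s : ℂ) + c‖
  have hc2 := re_sq_add_im_sq_of_norm_eq_one hc
  have hA2 : A ^ 2 = s ^ 2 + 1 - 2 * s * c.re := by
    simp only [A, Complex.sq_norm, normSq_apply, sub_re, sub_im, ofReal_re, ofReal_im]
    linear_combination hc2
  have hA'2 : A' ^ 2 = s ^ 2 + 1 + 2 * s * c.re := by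
    simp only [A', Complex.sq_norm, normSq_apply, add_re, add_im, ofReal_re, ofReal_im]
    linear_combination hc2
  have hA_le : A ≤ 2 := by
    calc A ≤ ‖(s : ℂ)‖ + ‖c‖ := norm_sub_le _ _
      _ ≤ 2 := by rw [norm_real, Real.norm_of_nonneg hs₀.le, hc]; linarith
  have hρ : ρ ≤ 1 / 2 := by nlinarith [abs_nonneg c.re]
  have hA_lb : 1 + s ^ 2 - 2 * s * ρ ≤ A ^ 2 := by
    nlinarith [le_abs_self c.re]
  have hA_pos : 0 < A := by
    by_contra! h
    have : A = 0 := le_antisymm h (norm_nonneg _)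
    nlinarith
  have hcross : |A - A'| * (A + A') = 4 * s * |c.re| := by
    rw [← abs_of_nonneg (by positivity : 0 ≤ A + A'), ← abs_mul,
      show (A - A') * (A + A') = -(4 * s * c.re) by nlinarith, abs_neg, abs_mul,
      abs_of_pos (by positivity : 0 < 4 * s)]
  have hloss : A * (|A - A'| * g) ≤ 2 * ρ * (1 + s) := by
    calc A * (|A - A'| * g) ≤ (A + A') * |A - A'| * g := by
          have hA' : 0 ≤ A' := norm_nonneg _
          nlinarith [mul_nonneg (mul_nonneg hA' (abs_nonneg (A - A'))) hg]
      _ = 4 * s * |c.re| * g := by rw [mul_comm (A + A'), hcross]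
      _ ≤ 2 * ρ * (1 + s) := by nlinarith [abs_nonneg c.re]
  refine le_of_mul_le_mul_left ?_ hA_pos
  nlinarith [sq_nonneg (s - 2 * ρ)]

end Complex

section PhaseSeparated

variable {V : Type*} [NormedAddCommGroup V] [NormedSpace ℂ V]

def PhaseSeparated (m : ℝ) (u v : V) : Prop :=
  ∀ c : ℂ, ‖c‖ = 1 → m ≤ ‖u - c • v‖

namespace PhaseSeparated

variable {m : ℝ} {u v : V}

lemma symm (h : PhaseSeparated m u v) : PhaseSeparated m v u := by
  intro c hc
  have hcc : c * conj c = 1 := by rw [Complex.mul_conj', hc]; norm_num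
  calc m ≤ ‖u - conj c • v‖ := h (conj c) (by rwa [Complex.norm_conj])
    _ = ‖c • (u - conj c • v)‖ := by rw [norm_smul, hc, one_mul]
    _ = ‖v - c • u‖ := by rw [smul_sub, smul_smul, hcc, one_smul, ← norm_neg, neg_sub]

lemma smul (h : PhaseSeparated m u v) (a : ℂ) : PhaseSeparated (‖a‖ * m) (a • u) (a • v) := by
  intro c hc
  rw [smul_comm c a, ← smul_sub, norm_smul]
  exact mul_le_mul_of_nonneg_left (h c hc) (norm_nonneg a)

lemma smul_right (h : PhaseSeparated m u v) {c₀ : ℂ} (hc₀ : ‖c₀‖ = 1) :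
    PhaseSeparated m u (c₀ • v) := by
  intro c hc
  rw [smul_smul]
  exact h _ (by rw [norm_mul, hc, hc₀, one_mul])

lemma le_norm_add (h : PhaseSeparated m u v) : m ≤ ‖u + v‖ := by
  simpa using h (-1) (by simp)

lemma mul_sub_le_norm_smul_add_smul (h : PhaseSeparated m u v) (a b : ℂ) :
    ‖a‖ * m - |‖a‖ - ‖b‖| * ‖v‖ ≤ ‖a • u + b • v‖ := by
  rcases eq_or_ne a 0 with rfl | ha
  · simp only [norm_zero, zero_mul, zero_sub, zero_smul, zero_add, abs_neg, abs_norm]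
    exact (neg_nonpos.mpr (by positivity)).trans (norm_nonneg _)
  obtain ⟨c, hc, hdist⟩ := Complex.exists_norm_eq_one_norm_sub_eq (-b / a)
  have hsplit : a • u + b • v = a • (u - c • v) - (a * (-b / a - c)) • v := by
    rw [show a * (-b / a - c) = -b - a * c by field_simp]
    module
  have hloss : ‖a * (-b / a - c)‖ = |‖a‖ - ‖b‖| := by
    rw [norm_mul, hdist, norm_div, norm_neg, ← abs_norm a, ← abs_mul, abs_norm, mul_sub,
      mul_div_cancel₀ _ (norm_ne_zero_iff.mpr ha), mul_one, abs_sub_comm]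
  calc ‖a‖ * m - |‖a‖ - ‖b‖| * ‖v‖ ≤ ‖a • (u - c • v)‖ - ‖(a * (-b / a - c)) • v‖ := by
        rw [norm_smul a, norm_smul, hloss]
        gcongr
        exact h c hc
    _ ≤ ‖a • u + b • v‖ := hsplit ▸ norm_sub_norm_le _ _

lemma max_mul_half_le_norm_smul_add_smul (h : PhaseSeparated m u v) (hu : ‖u‖ = 1)
    (hv : ‖v‖ = 1) (a b : ℂ) : max ‖a‖ ‖b‖ * (m / 2) ≤ ‖a • u + b • v‖ := by
  wlog hab : ‖b‖ ≤ ‖a‖ generalizing u v a b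
  · rw [max_comm, add_comm]
    exact this h.symm hv hu b a (le_of_not_ge hab)
  have h₁ := h.mul_sub_le_norm_smul_add_smul a b
  have h₂ : ‖a‖ * ‖u‖ - ‖b‖ * ‖v‖ ≤ ‖a • u + b • v‖ := by
    rw [← norm_smul, ← norm_smul, ← norm_neg (b • v)]
    exact (norm_sub_norm_le _ _).trans_eq (by rw [sub_neg_eq_add])
  rw [max_eq_left hab, abs_of_nonneg (sub_nonneg.mpr hab), hv] at *
  rw [hu] at h₂
  linarith

lemma add_sub (h : PhaseSeparated m u v) (hm : 0 ≤ m) (hu : ‖u‖ = 1) (hv : ‖v‖ = 1) :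
    PhaseSeparated (m / 2) (u + v) (u - v) := by
  intro c hc
  have hsum : ‖1 - c‖ ^ 2 + ‖1 + c‖ ^ 2 = 4 := by
    rw [Complex.sq_norm, Complex.sq_norm, Complex.normSq_sub, Complex.normSq_add,
      Complex.normSq_one, Complex.normSq_eq_norm_sq c, hc]
    ring
  have hmax : 1 ≤ max ‖1 - c‖ ‖1 + c‖ := by
    by_contra! hlt
    obtain ⟨h₁, h₂⟩ := max_lt_iff.mp hlt
    nlinarith [norm_nonneg (1 - c), norm_nonneg (1 + c)]
  calc m / 2 ≤ max ‖1 - c‖ ‖1 + c‖ * (m / 2) := le_mul_of_one_le_left (by positivity) hmax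
    _ ≤ ‖(1 - c) • u + (1 + c) • v‖ := h.max_mul_half_le_norm_smul_add_smul hu hv _ _
    _ = ‖u + v - c • (u - v)‖ := by congr 1; module

end PhaseSeparated

lemma phaseSeparated_iInf (u v : V) :
    PhaseSeparated (⨅ c : sphere (0 : ℂ) 1, ‖u - (c : ℂ) • v‖) u v :=
  fun c hc ↦ ciInf_le ⟨0, by rintro _ ⟨c, rfl⟩; positivity⟩ (⟨c, by simpa using hc⟩ : sphere _ _)

lemma exists_norm_sub_smul_eq_iInf (u v : V) :
    ∃ c₀ : ℂ, ‖c₀‖ = 1 ∧ ‖u - c₀ • v‖ = ⨅ c : sphere (0 : ℂ) 1, ‖u - (c : ℂ) • v‖ := by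
  obtain ⟨c₀, hc₀, hmin⟩ := (isCompact_sphere (0 : ℂ) 1).exists_isMinOn
    (NormedSpace.sphere_nonempty.mpr zero_le_one)
    (by fun_prop : Continuous fun c : ℂ ↦ ‖u - c • v‖).continuousOn
  have hc₀' : ‖c₀‖ = 1 := by simpa using hc₀
  exact ⟨c₀, hc₀', le_antisymm (le_ciInf fun c ↦ hmin c.2)
    (phaseSeparated_iInf u v c₀ hc₀')⟩

lemma exists_phaseSeparated_one (u v : V)
    (hd : 0 < ⨅ c : sphere (0 : ℂ) 1, ‖u - (c : ℂ) • v‖) :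
    ∃ a b : ℂ, ‖a‖ = (⨅ c : sphere (0 : ℂ) 1, ‖u - (c : ℂ) • v‖)⁻¹ ∧ ‖b‖ = ‖a‖ ∧
      ‖a • u - b • v‖ = 1 ∧ PhaseSeparated 1 (a • u) (b • v) := by
  set d := ⨅ c : sphere (0 : ℂ) 1, ‖u - (c : ℂ) • v‖
  obtain ⟨c₀, hc₀, hmin⟩ := exists_norm_sub_smul_eq_iInf u v
  have ha : ‖((d⁻¹ : ℝ) : ℂ)‖ = d⁻¹ := by
    rw [Complex.norm_real, Real.norm_of_nonneg (by positivity)]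
  refine ⟨(d⁻¹ : ℝ), (d⁻¹ : ℝ) * c₀, ha, by rw [norm_mul, hc₀, mul_one], ?_, ?_⟩
  · rw [← smul_smul, ← smul_sub, norm_smul, ha, hmin, inv_mul_cancel₀ hd.ne']
  · have := ((phaseSeparated_iInf u v).smul_right hc₀).smul ((d⁻¹ : ℝ) : ℂ)
    rwa [ha, inv_mul_cancel₀ hd.ne', smul_smul] at this

lemma PhaseSeparated.le_norm_inv_norm_smul_add_sub_smul_sub {F G : V} {m ρ : ℝ}
    (h : PhaseSeparated 1 F G) (hFG : ‖F - G‖ = 1) (hm : 0 ≤ m)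
    (hbudget : 2 * m + 2 * ρ + 4 * ρ ^ 2 ≤ 1) {c : ℂ} (hc : ‖c‖ = 1) (hcρ : |c.re| ≤ ρ) :
    m ≤ ‖(‖F + G‖⁻¹ : ℂ) • (F + G) - c • (F - G)‖ := by
  set α := ‖F + G‖
  have hα : 1 ≤ α := h.le_norm_add
  have hG : 2 * ‖G‖ ≤ α + 1 := by
    calc 2 * ‖G‖ = ‖(F + G) - (F - G)‖ := by
          rw [show (F + G) - (F - G) = (2 : ℂ) • G by module, norm_smul, Complex.norm_two]
      _ ≤ α + 1 := hFG ▸ norm_sub_le _ _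
  have hsplit : (α⁻¹ : ℂ) • (F + G) - c • (F - G) =
      ((α⁻¹ : ℝ) - c : ℂ) • F + ((α⁻¹ : ℝ) + c : ℂ) • G := by
    push_cast; module
  have hsG : 2 * α⁻¹ * ‖G‖ ≤ 1 + α⁻¹ := by
    calc 2 * α⁻¹ * ‖G‖ = α⁻¹ * (2 * ‖G‖) := by ring
      _ ≤ α⁻¹ * (α + 1) := by gcongr
      _ = 1 + α⁻¹ := by field_simp
  rw [hsplit]
  calc m ≤ ‖((α⁻¹ : ℝ) - c : ℂ)‖ - |‖((α⁻¹ : ℝ) - c : ℂ)‖ - ‖((α⁻¹ : ℝ) + c : ℂ)‖| * ‖G‖ :=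
        Complex.le_norm_ofReal_sub_sub_mul hc (by positivity) (inv_le_one_of_one_le₀ hα) hcρ hm
          (norm_nonneg G) hsG hbudget
    _ ≤ _ := by simpa using h.mul_sub_le_norm_smul_add_smul ((α⁻¹ : ℝ) - c) ((α⁻¹ : ℝ) + c)

end PhaseSeparated

/-- `1/√2 - 1/2` is the positive root of `4ρ² + 4ρ = 1`. -/
lemma exists_gt_of_lt_inv_sqrt_two_sub_half {m : ℝ} (hm : 0 < m)
    (hm' : m < 1 / √2 - 1 / 2) : ∃ ρ, m < ρ ∧ 2 * m + 2 * ρ + 4 * ρ ^ 2 ≤ 1 := by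
  set ρ₀ := 1 / √2 - 1 / 2
  have hρ₀ : 4 * ρ₀ ^ 2 + 4 * ρ₀ = 1 := by
    have h2 : √2 ^ 2 = 2 := Real.sq_sqrt zero_le_two
    have : 1 / √2 = √2 / 2 := by field_simp; rw [h2]
    simp only [ρ₀, this]
    nlinarith
  refine ⟨(m + ρ₀) / 2, by linarith, ?_⟩
  nlinarith

section ContinuousMap

variable {K : Type*} [TopologicalSpace K]

@[simp]
lemma absDiffCM_apply (f g : C(K, ℂ)) (t : K) : absDiffCM f g t = ‖f t‖ - ‖g t‖ := rfl

@[simp]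
lemma sqrtReMulConjCM_apply (u v : C(K, ℂ)) (t : K) :
    sqrtReMulConjCM u v t = √|(u t * conj (v t)).re| := rfl

lemma absDiffCM_smul_smul {a b : ℂ} (hab : ‖a‖ = ‖b‖) (f g : C(K, ℂ)) :
    absDiffCM (a • f) (b • g) = ‖a‖ • absDiffCM f g := by
  ext t
  simp [hab, mul_sub]

variable [CompactSpace K]

lemma ContinuousMap.exists_norm_apply_eq_norm {E : Type*} [NormedAddCommGroup E] [Nonempty K]
    (f : C(K, E)) : ∃ t, ‖f t‖ = ‖f‖ := by
  obtain ⟨t, -, ht⟩ := isCompact_univ.exists_isMaxOn Set.univ_nonempty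
    (continuous_norm.comp f.continuous).continuousOn
  exact ⟨t, le_antisymm (f.norm_coe_le_norm t)
    ((f.norm_le (norm_nonneg _)).mpr fun s ↦ ht (Set.mem_univ s))⟩

lemma norm_absDiffCM_add_sub_le (u v : C(K, ℂ)) :
    ‖absDiffCM (u + v) (u - v)‖ ≤ 2 * ‖sqrtReMulConjCM u v‖ := by
  refine (ContinuousMap.norm_le _ (by positivity)).mpr fun t ↦ ?_
  calc ‖absDiffCM (u + v) (u - v) t‖ = |‖u t + v t‖ - ‖u t - v t‖| := by simp
    _ ≤ 2 * sqrtReMulConjCM u v t := Complex.abs_norm_add_sub_norm_sub_le _ _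
    _ ≤ 2 * ‖sqrtReMulConjCM u v‖ := by gcongr; exact ContinuousMap.apply_le_norm _ t

lemma norm_sqrtReMulConjCM_lt {u v : C(K, ℂ)} {η ε : ℝ} (hε : 0 < ε) (hηε : η < ε ^ 2)
    (h : ∀ t, |(u t * conj (v t)).re| ≤ η) : ‖sqrtReMulConjCM u v‖ < ε := by
  refine (ContinuousMap.norm_lt_iff _ hε).mpr fun t ↦ ?_
  rw [sqrtReMulConjCM_apply, Real.norm_of_nonneg (Real.sqrt_nonneg _), Real.sqrt_lt' hε]
  exact (h t).trans_lt hηε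

lemma sq_re_sub_le_sq_norm_sub_smul {u v : C(K, ℂ)} {η : ℝ} (hu : ‖u‖ = 1)
    (h : ∀ t, |(u t * conj (v t)).re| ≤ η) {c : ℂ} (hc : ‖c‖ = 1) :
    c.re ^ 2 - 2 * η ≤ ‖u - c • v‖ ^ 2 := by
  have : Nonempty K := by
    by_contra hK
    rw [not_nonempty_iff] at hK
    linarith [(u.norm_le le_rfl).mpr isEmptyElim]
  obtain ⟨t, ht⟩ := u.exists_norm_apply_eq_norm
  calc c.re ^ 2 - 2 * η ≤ ‖u t‖ ^ 2 * c.re ^ 2 - 2 * |(u t * conj (v t)).re| := by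
        rw [ht, hu]; linarith [h t]
    _ ≤ ‖u t - c * v t‖ ^ 2 := Complex.sq_norm_mul_re_sq_sub_le _ _ hc
    _ ≤ ‖u - c • v‖ ^ 2 := by gcongr; exact (u - c • v).norm_coe_le_norm t

lemma abs_re_inv_norm_smul_add_mul_conj_sub_le {F G : C(K, ℂ)} {η : ℝ} (hFG : ‖F - G‖ = 1)
    (hα : 1 ≤ ‖F + G‖) (hη : ‖absDiffCM F G‖ ≤ η) (t : K) :
    |(((‖F + G‖⁻¹ : ℂ) • (F + G)) t * conj ((F - G) t)).re| ≤ 2 * η := by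
  set α := ‖F + G‖
  have hsum : ‖F t‖ + ‖G t‖ ≤ α + 1 := by
    have h₁ : ‖2 * F t‖ ≤ ‖(F + G) t‖ + ‖(F - G) t‖ := by
      rw [show 2 * F t = (F + G) t + (F - G) t by simp; ring]; exact norm_add_le _ _
    have h₂ : ‖2 * G t‖ ≤ ‖(F + G) t‖ + ‖(F - G) t‖ := by
      rw [show 2 * G t = (F + G) t - (F - G) t by simp; ring]; exact norm_sub_le _ _
    rw [norm_mul, Complex.norm_two] at h₁ h₂
    linarith [(F + G).norm_coe_le_norm t, (F - G).norm_coe_le_norm t]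
  have hdiff : |‖F t‖ - ‖G t‖| ≤ η := by
    simpa using (absDiffCM F G).norm_coe_le_norm t |>.trans hη
  have hre : (((α⁻¹ : ℂ) • (F + G)) t * conj ((F - G) t)).re =
      α⁻¹ * (‖F t‖ ^ 2 - ‖G t‖ ^ 2) := by
    rw [← Complex.re_add_mul_conj_sub, ← Complex.re_ofReal_mul]
    congr 1
    simp only [ContinuousMap.smul_apply, ContinuousMap.add_apply, ContinuousMap.sub_apply,
      smul_eq_mul, Complex.ofReal_inv]
    ring
  rw [hre, abs_mul, abs_of_pos (by positivity), sq_sub_sq, abs_mul,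
    abs_of_nonneg (by positivity : 0 ≤ ‖F t‖ + ‖G t‖), inv_mul_le_iff₀ (by positivity)]
  nlinarith [abs_nonneg (‖F t‖ - ‖G t‖)]

lemma phaseSeparated_inv_norm_smul_add_sub {F G : C(K, ℂ)} {m ρ η : ℝ} (hFG : ‖F - G‖ = 1)
    (hsep : PhaseSeparated 1 F G) (hη : ‖absDiffCM F G‖ ≤ η) (hm : 0 ≤ m) (hρ : 0 ≤ ρ)
    (hmρ : m ^ 2 + 4 * η ≤ ρ ^ 2) (hbudget : 2 * m + 2 * ρ + 4 * ρ ^ 2 ≤ 1) :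
    PhaseSeparated m ((‖F + G‖⁻¹ : ℂ) • (F + G)) (F - G) := by
  intro c hc
  rcases le_or_gt |c.re| ρ with hcρ | hcρ
  · exact hsep.le_norm_inv_norm_smul_add_sub_smul_sub hFG hm hbudget hc hcρ
  have hα := hsep.le_norm_add
  have hu : ‖(‖F + G‖⁻¹ : ℂ) • (F + G)‖ = 1 :=
    norm_smul_inv_norm (norm_pos_iff.mp (one_pos.trans_le hα))
  have h := sq_re_sub_le_sq_norm_sub_smul hu
    (abs_re_inv_norm_smul_add_mul_conj_sub_le hFG hα hη) hc
  refine (pow_le_pow_iff_left₀ hm (norm_nonneg _) two_ne_zero).mp ?_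
  nlinarith [sq_abs c.re]

lemma exists_phaseSeparated_one_mul_norm_absDiffCM_lt {f g : C(K, ℂ)} {C : ℝ} (hC : 0 ≤ C)
    (h : C * ‖absDiffCM f g‖ < ⨅ c : sphere (0 : ℂ) 1, ‖f - (c : ℂ) • g‖) :
    ∃ a b : ℂ, ‖a • f - b • g‖ = 1 ∧ PhaseSeparated 1 (a • f) (b • g) ∧
      C * ‖absDiffCM (a • f) (b • g)‖ < 1 := by
  have hd := (mul_nonneg hC (norm_nonneg _)).trans_lt h
  obtain ⟨a, b, ha, hab, hnorm, hsep⟩ := exists_phaseSeparated_one f g hd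
  refine ⟨a, b, hnorm, hsep, ?_⟩
  rw [absDiffCM_smul_smul hab.symm, norm_smul, norm_norm, ha, mul_left_comm,
    inv_mul_lt_iff₀ hd, mul_one]
  exact h

def FailsStablePhaseRetrieval (E : Submodule ℂ C(K, ℂ)) : Prop :=
  ∀ C : ℝ, 1 ≤ C → ∃ f ∈ E, ∃ g ∈ E,
    C * ‖absDiffCM f g‖ < ⨅ c : sphere (0 : ℂ) 1, ‖f - (c : ℂ) • g‖

def HasPhaseSeparatedAlmostOrthogonalPairs (E : Submodule ℂ C(K, ℂ)) (m : ℝ) : Prop :=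
  ∀ ε > (0 : ℝ), ∃ u ∈ E, ∃ v ∈ E, ‖u‖ = 1 ∧ ‖v‖ = 1 ∧ PhaseSeparated m u v ∧
    ‖sqrtReMulConjCM u v‖ < ε

lemma HasPhaseSeparatedAlmostOrthogonalPairs.failsStablePhaseRetrieval
    {E : Submodule ℂ C(K, ℂ)} {m : ℝ} (h : HasPhaseSeparatedAlmostOrthogonalPairs E m)
    (hm : 0 < m) : FailsStablePhaseRetrieval E := by
  intro C hC
  obtain ⟨u, hu, v, hv, hu₁, hv₁, hsep, hsmall⟩ := h (m / (4 * C)) (by positivity)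
  refine ⟨u + v, E.add_mem hu hv, u - v, E.sub_mem hu hv, ?_⟩
  calc C * ‖absDiffCM (u + v) (u - v)‖ ≤ C * (2 * ‖sqrtReMulConjCM u v‖) := by
        gcongr; exact norm_absDiffCM_add_sub_le u v
    _ < C * (2 * (m / (4 * C))) := by gcongr
    _ = m / 2 := by field_simp; ring
    _ ≤ ⨅ c : sphere (0 : ℂ) 1, ‖u + v - (c : ℂ) • (u - v)‖ :=
        le_ciInf fun c ↦ hsep.add_sub hm.le hu₁ hv₁ c (norm_eq_of_mem_sphere c)

lemma FailsStablePhaseRetrieval.hasPhaseSeparatedAlmostOrthogonalPairs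
    {E : Submodule ℂ C(K, ℂ)} (h : FailsStablePhaseRetrieval E) {m : ℝ} (hm : 0 < m)
    (hm' : m < 1 / √2 - 1 / 2) : HasPhaseSeparatedAlmostOrthogonalPairs E m := by
  intro ε hε
  obtain ⟨ρ, hmρ, hbudget⟩ := exists_gt_of_lt_inv_sqrt_two_sub_half hm hm'
  set η := min (ε ^ 2 / 4) ((ρ ^ 2 - m ^ 2) / 4)
  have hη : 0 < η := lt_min (by positivity) (by nlinarith)
  obtain ⟨f, hf, g, hg, hlt⟩ := h (max 1 η⁻¹) (le_max_left _ _)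
  obtain ⟨a, b, hFG, hsep, hsmall⟩ :=
    exists_phaseSeparated_one_mul_norm_absDiffCM_lt (by positivity) hlt
  have hdiff : ‖absDiffCM (a • f) (b • g)‖ ≤ η := by
    have := (mul_le_mul_of_nonneg_right (le_max_right 1 η⁻¹) (norm_nonneg _)).trans_lt hsmall
    rw [inv_mul_lt_iff₀ hη, mul_one] at this
    exact this.le
  have hηρ : m ^ 2 + 4 * η ≤ ρ ^ 2 := by linarith [min_le_right (ε ^ 2 / 4) ((ρ ^ 2 - m ^ 2) / 4)]
  have hηε : 2 * η < ε ^ 2 := by linarith [min_le_left (ε ^ 2 / 4) ((ρ ^ 2 - m ^ 2) / 4)]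
  have hF := E.smul_mem a hf
  have hG := E.smul_mem b hg
  have hα := hsep.le_norm_add
  exact ⟨_, E.smul_mem _ (E.add_mem hF hG), _, E.sub_mem hF hG,
    norm_smul_inv_norm (norm_pos_iff.mp (one_pos.trans_le hα)), hFG,
    phaseSeparated_inv_norm_smul_add_sub hFG hsep hdiff hm.le (hm.trans hmρ).le hηρ hbudget,
    norm_sqrtReMulConjCM_lt hε hηε (abs_re_inv_norm_smul_add_mul_conj_sub_le hFG hα hdiff)⟩

end ContinuousMap

theorem fails_complex_SPR_tfae_general
    (K : Type*) [TopologicalSpace K] [CompactSpace K]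
    (E : Submodule ℂ C(K, ℂ)) :
    List.TFAE
      [ ∀ C : ℝ, 1 ≤ C → ∃ f ∈ E, ∃ g ∈ E,
          C * ‖absDiffCM f g‖ < ⨅ c : Metric.sphere (0 : ℂ) 1, ‖f - (c : ℂ) • g‖,
        ∀ m : ℝ, 0 < m → m < 1 / Real.sqrt 2 - 1 / 2 → ∀ ε > (0 : ℝ),
          ∃ u ∈ E, ∃ v ∈ E, ‖u‖ = 1 ∧ ‖v‖ = 1 ∧
            (∀ c : ℂ, ‖c‖ = 1 → m ≤ ‖u - c • v‖) ∧ ‖sqrtReMulConjCM u v‖ < ε,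
        ∃ m : ℝ, 0 < m ∧ ∀ ε > (0 : ℝ),
          ∃ u ∈ E, ∃ v ∈ E, ‖u‖ = 1 ∧ ‖v‖ = 1 ∧
            (∀ c : ℂ, ‖c‖ = 1 → m ≤ ‖u - c • v‖) ∧ ‖sqrtReMulConjCM u v‖ < ε ] := by
  have hρ₀ : 0 < 1 / √2 - 1 / 2 := by
    have : √2 < 2 := (Real.sqrt_lt' two_pos).mpr (by norm_num)
    linarith [one_div_lt_one_div_of_lt (by positivity) this]
  tfae_have 1 → 2 := fun h _ hm hm' ↦
    FailsStablePhaseRetrieval.hasPhaseSeparatedAlmostOrthogonalPairs h hm hm'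
  tfae_have 2 → 3 := fun h ↦ ⟨_, half_pos hρ₀, h _ (half_pos hρ₀) (half_lt_self hρ₀)⟩
  tfae_have 3 → 1 := fun ⟨_, hm, h⟩ ↦
    HasPhaseSeparatedAlmostOrthogonalPairs.failsStablePhaseRetrieval h hm
  tfae_finish

/-- Characterization of complex stable phase retrieval: a complex subspace `E` of
`C(K; ℂ)` fails stable phase retrieval iff it contains uniformly separated
normalized `ε`-almost perpendicular pairs for every `ε > 0`. -/
theorem fails_complex_SPR_tfae
    (K : Type*) [TopologicalSpace K] [CompactSpace K] [T2Space K]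
    (E : Submodule ℂ C(K, ℂ)) :
    List.TFAE
      [ ∀ C : ℝ, 1 ≤ C → ∃ f ∈ E, ∃ g ∈ E,
          C * ‖absDiffCM f g‖ < ⨅ c : Metric.sphere (0 : ℂ) 1, ‖f - (c : ℂ) • g‖,
        ∀ m : ℝ, 0 < m → m < 1 / Real.sqrt 2 - 1 / 2 → ∀ ε > (0 : ℝ),
          ∃ u ∈ E, ∃ v ∈ E, ‖u‖ = 1 ∧ ‖v‖ = 1 ∧
            (∀ c : ℂ, ‖c‖ = 1 → m ≤ ‖u - c • v‖) ∧ ‖sqrtReMulConjCM u v‖ < ε,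
        ∃ m : ℝ, 0 < m ∧ ∀ ε > (0 : ℝ),
          ∃ u ∈ E, ∃ v ∈ E, ‖u‖ = 1 ∧ ‖v‖ = 1 ∧
            (∀ c : ℂ, ‖c‖ = 1 → m ≤ ‖u - c • v‖) ∧ ‖sqrtReMulConjCM u v‖ < ε ] :=
  fails_complex_SPR_tfae_general K E
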